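/- arXiv:1803.06590 — 5 statements merged into one kernel-verified Lean document; each statement's English description precedes it below -/
import Mathlib

section
/- The isomorphism classes of indecomposable representations of K(n) with dimension vector (l,1), 1 ≤ l ≤ n, are in bijection with points of the Grassmannian Gr_l(ℂ^n): the bijection sends an indecomposable representation, given by a rank-l matrix M ∈ ℂ^{l×n}, to the l-dimensional row space of M, and two such representations are isomorphic if and only if their matrices have the same row space. -/
/-!
A matrix `M'` has its row space inside that of `M` exactly when `M' = A * M` for some `A`.
Hence two matrices of full row rank with the same row space satisfy `M' = A * M` and
`M = B * M'`, and independence of the rows of `M` forces `B * A = 1`, so `A` is invertible.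
Conversely, the rows of a basis of `U` form a matrix of full row rank with row space `U`.
-/

open LinearMap

namespace Matrix

variable {K R : Type*} {m m' n : Type*} [Fintype m] [Fintype m']

theorem range_vecMulLinear_le_iff [CommSemiring R] {M : Matrix m n R} {M' : Matrix m' n R} :
    range M'.vecMulLinear ≤ range M.vecMulLinear ↔ ∃ A : Matrix m' m R, M' = A * M := by
  constructor
  · intro h
    have hrow (i : m') : M'.row i ∈ range M.vecMulLinear :=
      h (range_vecMulLinear M' ▸ Submodule.subset_span ⟨i, rfl⟩)
    choose A hA using hrow
    exact ⟨of A, ext_row fun i => (hA i).symm⟩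
  · rintro ⟨A, rfl⟩ _ ⟨v, rfl⟩
    exact ⟨v ᵥ* A, vecMul_vecMul v A M⟩

theorem linearIndependent_row_iff_rank_eq_card [Field K] [Fintype n] {M : Matrix m n K} :
    LinearIndependent K M.row ↔ M.rank = Fintype.card m := by
  rw [linearIndependent_iff_card_eq_finrank_span, Set.finrank, ← rank_eq_finrank_span_row,
    eq_comm]

theorem eq_one_of_mul_eq_self [Field K] [DecidableEq m] {M : Matrix m n K}
    (hM : LinearIndependent K M.row) {C : Matrix m m K} (hC : C * M = M) : C = 1 := by
  cases isEmpty_or_nonempty m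
  · exact Subsingleton.elim _ _
  · exact mul_left_injective_iff_vecMul_injective.2 (vecMul_injective_iff.2 hM)
      (hC.trans (Matrix.one_mul M).symm)

theorem range_vecMulLinear_eq_iff [Field K] [DecidableEq m] {M M' : Matrix m n K}
    (hM : LinearIndependent K M.row) :
    range M.vecMulLinear = range M'.vecMulLinear ↔
      ∃ A : Matrix m m K, IsUnit A ∧ M' = A * M := by
  constructor
  · intro h
    obtain ⟨A, hA⟩ := range_vecMulLinear_le_iff.1 h.ge
    obtain ⟨B, hB⟩ := range_vecMulLinear_le_iff.1 h.le
    have hBA : B * A = 1 := eq_one_of_mul_eq_self hM (by rw [Matrix.mul_assoc, ← hA, ← hB])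
    exact ⟨A, isUnit_iff_exists_inv'.2 ⟨B, hBA⟩, hA⟩
  · rintro ⟨A, hA, rfl⟩
    refine le_antisymm ?_ (range_vecMulLinear_le_iff.2 ⟨A, rfl⟩)
    have hdet : IsUnit A.det := (isUnit_iff_isUnit_det A).1 hA
    exact range_vecMulLinear_le_iff.2 ⟨A⁻¹, (nonsing_inv_mul_cancel_left A M hdet).symm⟩

theorem exists_linearIndependent_row_range_vecMulLinear_eq [Field K] [Fintype n]
    (U : Submodule K (n → K)) (hU : Module.finrank K U = Fintype.card m) :
    ∃ M : Matrix m n K, LinearIndependent K M.row ∧ range M.vecMulLinear = U := by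
  let b : Module.Basis m K U :=
    (Module.finBasisOfFinrankEq K U hU).reindex (Fintype.equivFin m).symm
  refine ⟨of fun i => (b i : n → K), b.linearIndependent.map' U.subtype U.ker_subtype, ?_⟩
  rw [range_vecMulLinear]
  change Submodule.span K (Set.range (U.subtype ∘ b)) = U
  rw [Set.range_comp, ← Submodule.map_span, b.span_eq, Submodule.map_top, Submodule.range_subtype]

end Matrix

theorem stmt_6_general (n l : ℕ) :
    (∀ M M' : Matrix (Fin l) (Fin n) ℂ, M.rank = l → M'.rank = l →
      ((∃ (g : GL (Fin l) ℂ) (c : ℂˣ),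
          M' = (c : ℂ) • ((g : Matrix (Fin l) (Fin l) ℂ) * M)) ↔
        LinearMap.range M.vecMulLinear = LinearMap.range M'.vecMulLinear)) ∧
    (∀ U : Submodule ℂ (Fin n → ℂ), Module.finrank ℂ U = l →
      ∃ M : Matrix (Fin l) (Fin n) ℂ, M.rank = l ∧ LinearMap.range M.vecMulLinear = U) := by
  refine ⟨fun M M' hM _ => ?_, fun U hU => ?_⟩
  · have hM : LinearIndependent ℂ M.row := by
      rwa [Matrix.linearIndependent_row_iff_rank_eq_card, Fintype.card_fin]
    rw [Matrix.range_vecMulLinear_eq_iff hM]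
    constructor
    · rintro ⟨g, c, rfl⟩
      exact ⟨(c : ℂ) • (g : Matrix (Fin l) (Fin l) ℂ), g.isUnit.smul c,
        (Matrix.smul_mul _ _ _).symm⟩
    · rintro ⟨A, hA, rfl⟩
      exact ⟨hA.unit, 1, by simp⟩
  · obtain ⟨M, hM, hMU⟩ :=
      Matrix.exists_linearIndependent_row_range_vecMulLinear_eq (m := Fin l) U (by simpa using hU)
    exact ⟨M, by simpa using Matrix.linearIndependent_row_iff_rank_eq_card.1 hM, hMU⟩

/-- indecomposable representations of `K(n)` with dimension vector `(l, 1)`,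
encoded by rank-`l` matrices `M : Matrix (Fin l) (Fin n) ℂ`, are classified up to
isomorphism (simultaneous row operations `g ∈ GL_l(ℂ)` and scaling `c ∈ ℂ*`) by their
row space `range M.vecMulLinear ∈ Gr_l(ℂ^n)`, and every `l`-dimensional subspace of
`ℂ^n` arises this way. -/
theorem stmt_6 (n l : ℕ) (hl : 1 ≤ l) (hln : l ≤ n) :
    (∀ M M' : Matrix (Fin l) (Fin n) ℂ, M.rank = l → M'.rank = l →
      ((∃ (g : GL (Fin l) ℂ) (c : ℂˣ),
          M' = (c : ℂ) • ((g : Matrix (Fin l) (Fin l) ℂ) * M)) ↔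
        LinearMap.range M.vecMulLinear = LinearMap.range M'.vecMulLinear)) ∧
    (∀ U : Submodule ℂ (Fin n → ℂ), Module.finrank ℂ U = l →
      ∃ M : Matrix (Fin l) (Fin n) ℂ, M.rank = l ∧ LinearMap.range M.vecMulLinear = U) :=
  stmt_6_general n l
end

section
/- For n ≥ 2 and m ≥ 2, the maximal Dyck path D_m in the lattice rectangle from (0,0) to (u_m, u_{m−1}) contains exactly u_{m−2} vertical edges that are immediately preceded by exactly n−1 horizontal edges; all other vertical edges of D_m are immediately preceded by exactly n horizontal edges. -/
/-
A path ending in a vertical step is determined by its run sequence: the list of the numbers of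
horizontal steps immediately preceding its successive vertical steps. Since `D_(m-1)` is a prefix
of `D_m`, removing the initial copy of `D_(m-1)` from a path amounts to removing the initial runs
of `D_(m-1)` from its run sequence, so the run sequences `ρ_m` of `D_m` (`m ≥ 2`) obey the same
recursion as the paths. By induction their entries are `n - 1` or `n`, and the number `c_m` of
entries `n - 1` satisfies `c_(m+2) = (n - 1) c_(m+1) + (c_(m+1) - c_m)`, the recursion of `u`.
-/

/-- The Chebyshev-like numbers `u 0 = 0`, `u 1 = 1`, `u (k+2) = n * u (k+1) - u k`. -/
def kron (n : ℕ) : ℕ → ℤ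
  | 0 => 0
  | 1 => 1
  | k + 2 => n * kron n (k + 1) - kron n k

/-- The maximal Dyck path `D_m`, as a word in the alphabet `Bool`
(`true` = horizontal step, `false` = vertical step). -/
def Dyck (n : ℕ) : ℕ → List Bool
  | 0 => []
  | 1 => [true]
  | 2 => List.replicate n true ++ [false]
  | m + 3 => List.flatten (List.replicate (n - 1) (Dyck n (m + 2))) ++
      (Dyck n (m + 2)).drop (Dyck n (m + 1)).length

/-- The number of horizontal edges immediately preceding position `i` in the path `l`,
i.e. the length of the maximal run of `H`'s ending just before `i`. -/
def precH (l : List Bool) (i : ℕ) : ℕ :=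
  ((l.take i).reverse.takeWhile (fun b => b = true)).length

theorem Finset.card_filter_range_eq_countP (N : ℕ) (p : ℕ → Prop) [DecidablePred p] :
    ((Finset.range N).filter p).card = (List.range N).countP (fun i => decide (p i)) := by
  simp [Finset.card_def, Finset.filter_val, Finset.range_val, Multiset.range,
    List.countP_eq_length_filter]

theorem List.takeWhile_append_cons_of_neg {α : Type*} {p : α → Bool} (xs ys : List α) {a : α}
    (ha : p a = false) : (xs ++ a :: ys).takeWhile p = xs.takeWhile p := by
  induction xs with
  | nil => simp [ha]
  | cons b xs ih => by_cases hb : p b <;> simp [hb, ih]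

theorem precH_append_false_cons (u v : List Bool) (j : ℕ) :
    precH (u ++ false :: v) (u.length + 1 + j) = precH v j := by
  have htake : (u ++ false :: v).take (u.length + 1 + j) = (u ++ [false]) ++ v.take j := by
    simpa [Nat.add_assoc] using List.take_length_add_append (l₁ := u ++ [false]) (l₂ := v) j
  rw [precH, precH, htake, List.reverse_append, List.reverse_append, List.reverse_singleton,
    List.singleton_append, List.takeWhile_append_cons_of_neg _ _ (by simp)]

theorem precH_replicate_append (r : ℕ) (v : List Bool) :
    precH (List.replicate r true ++ v) r = r := by
  simp [precH, List.take_left']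

def pathOfRuns (rs : List ℕ) : List Bool :=
  rs.flatMap fun r => List.replicate r true ++ [false]

theorem pathOfRuns_cons (r : ℕ) (rs : List ℕ) :
    pathOfRuns (r :: rs) = List.replicate r true ++ false :: pathOfRuns rs := by
  simp [pathOfRuns]

theorem pathOfRuns_append (rs ss : List ℕ) :
    pathOfRuns (rs ++ ss) = pathOfRuns rs ++ pathOfRuns ss :=
  List.flatMap_append

theorem pathOfRuns_flatten_replicate (j : ℕ) (rs : List ℕ) :
    pathOfRuns (List.replicate j rs).flatten = (List.replicate j (pathOfRuns rs)).flatten := by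
  induction j with
  | zero => rfl
  | succ j ih => simp [List.replicate_succ, pathOfRuns_append, ih]

theorem pathOfRuns_drop_of_prefix {rs ss : List ℕ} (h : rs <+: ss) :
    (pathOfRuns ss).drop (pathOfRuns rs).length = pathOfRuns (ss.drop rs.length) := by
  obtain ⟨t, rfl⟩ := h
  rw [pathOfRuns_append, List.drop_left, List.drop_left]

def verticalRuns (l : List Bool) : List ℕ :=
  ((List.range l.length).filter fun i => l.getD i true = false).map (precH l)

theorem verticalRuns_replicate_append_false_cons (r : ℕ) (v : List Bool) :
    verticalRuns (List.replicate r true ++ false :: v) = r :: verticalRuns v := by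
  set w := List.replicate r true ++ false :: v
  have hblock : ((List.range (r + 1)).filter fun i => w.getD i true = false) = [r] := by
    rw [List.range_succ, List.filter_append, List.filter_eq_nil_iff.mpr, List.filter_singleton]
    · simp [w]
    · intro i hi
      rw [List.mem_range] at hi
      simp [w, List.getElem?_append_left (show i < (List.replicate r true).length by simpa)]
  have hshift (j : ℕ) : w.getD (r + 1 + j) true = v.getD j true ∧
      precH w (r + 1 + j) = precH v j := by
    refine ⟨?_, by simpa using precH_append_false_cons (List.replicate r true) v j⟩
    rw [List.getD_append_right _ _ _ _ (by simp; omega)]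
    simp [show r + 1 + j - r = j + 1 by omega]
  have hlen : w.length = (r + 1) + v.length := by simp [w]; omega
  rw [verticalRuns, hlen, List.range_add, List.filter_append, hblock, List.filter_map,
    List.map_append, List.map_map]
  simp only [Function.comp_def, hshift]
  simp [precH_replicate_append, verticalRuns, w]

theorem verticalRuns_pathOfRuns (rs : List ℕ) : verticalRuns (pathOfRuns rs) = rs := by
  induction rs with
  | nil => rfl
  | cons r rs ih => rw [pathOfRuns_cons, verticalRuns_replicate_append_false_cons, ih]

theorem precH_mem_verticalRuns {l : List Bool} {i : ℕ} (hi : i < l.length)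
    (hv : l.getD i true = false) : precH l i ∈ verticalRuns l :=
  List.mem_map_of_mem (List.mem_filter.mpr ⟨List.mem_range.mpr hi, by simpa using hv⟩)

theorem card_filter_vertical_precH_eq (l : List Bool) (r : ℕ) :
    ((Finset.range l.length).filter fun i => l.getD i true = false ∧ precH l i = r).card =
      (verticalRuns l).count r := by
  rw [Finset.card_filter_range_eq_countP, verticalRuns, List.count_eq_countP, List.countP_map,
    List.countP_filter]
  congr 1
  ext i
  simp [and_comm, beq_eq_decide]

-- Indexed so that `dyckRuns n k` is the run sequence of `D_(k+2)`.
def dyckRuns (n : ℕ) : ℕ → List ℕ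
  | 0 => [n]
  | 1 => List.replicate (n - 1) n ++ [n - 1]
  | k + 2 => (List.replicate (n - 1) (dyckRuns n (k + 1))).flatten ++
      (dyckRuns n (k + 1)).drop (dyckRuns n k).length

theorem dyckRuns_prefix_succ {n : ℕ} (hn : 2 ≤ n) : ∀ k, dyckRuns n k <+: dyckRuns n (k + 1)
  | 0 => ⟨List.replicate (n - 2) n ++ [n - 1], by
      rw [dyckRuns, dyckRuns, show n - 1 = n - 2 + 1 by omega, List.replicate_succ]; rfl⟩
  | k + 1 => by
    rw [dyckRuns, show n - 1 = n - 2 + 1 by omega, List.replicate_succ, List.flatten_cons,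
      List.append_assoc]
    exact List.prefix_append _ _

theorem mem_dyckRuns {n : ℕ} : ∀ {k r}, r ∈ dyckRuns n k → r = n - 1 ∨ r = n
  | 0, r, h => by simp_all [dyckRuns]
  | 1, r, h => by
    simp only [dyckRuns, List.mem_append, List.mem_replicate, List.mem_singleton] at h
    omega
  | k + 2, r, h => by
    simp only [dyckRuns, List.mem_append, List.mem_flatten, List.mem_replicate] at h
    rcases h with ⟨l, ⟨-, rfl⟩, hr⟩ | hr
    · exact mem_dyckRuns hr
    · exact mem_dyckRuns (List.mem_of_mem_drop hr)

theorem count_dyckRuns_add_two {n : ℕ} (hn : 2 ≤ n) (k r : ℕ) :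
    ((dyckRuns n (k + 2)).count r : ℤ) =
      n * (dyckRuns n (k + 1)).count r - (dyckRuns n k).count r := by
  obtain ⟨t, ht⟩ := dyckRuns_prefix_succ hn k
  rw [dyckRuns, ← ht, List.drop_left, List.count_append, List.count_flatten, List.map_replicate,
    List.sum_replicate, smul_eq_mul, List.count_append]
  push_cast [show 1 ≤ n by omega]
  ring

theorem count_dyckRuns {n : ℕ} (hn : 2 ≤ n) : ∀ k, ((dyckRuns n k).count (n - 1) : ℤ) = kron n k
  | 0 => by simp [dyckRuns, kron, List.count_singleton]; omega
  | 1 => by simp [dyckRuns, kron, List.count_replicate]; omega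
  | k + 2 => by rw [count_dyckRuns_add_two hn, count_dyckRuns hn k, count_dyckRuns hn (k + 1), kron]

theorem Dyck_eq_pathOfRuns {n : ℕ} (hn : 2 ≤ n) : ∀ k, Dyck n (k + 2) = pathOfRuns (dyckRuns n k)
  | 0 => by simp [Dyck, dyckRuns, pathOfRuns]
  | 1 => by
    obtain ⟨p, rfl⟩ : ∃ p, n = p + 1 := ⟨n - 1, by omega⟩
    simp [Dyck, dyckRuns, pathOfRuns, List.replicate_succ, List.flatMap_replicate]
  | k + 2 => by
    rw [Dyck, Dyck_eq_pathOfRuns hn k, Dyck_eq_pathOfRuns hn (k + 1),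
      pathOfRuns_drop_of_prefix (dyckRuns_prefix_succ hn k), dyckRuns, pathOfRuns_append,
      pathOfRuns_flatten_replicate]

/-- for `n ≥ 2` and `m ≥ 2`, every vertical edge of `D_m` is immediately
preceded by exactly `n - 1` or exactly `n` horizontal edges, and exactly `u (m-2)` of
the vertical edges are immediately preceded by exactly `n - 1` horizontal edges. -/
theorem stmt_9 (n m : ℕ) (hn : 2 ≤ n) (hm : 2 ≤ m) :
    (∀ i ∈ Finset.range (Dyck n m).length, (Dyck n m).getD i true = false →
      precH (Dyck n m) i = n - 1 ∨ precH (Dyck n m) i = n) ∧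
    ((((Finset.range (Dyck n m).length).filter
        (fun i => (Dyck n m).getD i true = false ∧ precH (Dyck n m) i = n - 1)).card : ℤ)
      = kron n (m - 2)) := by
  obtain ⟨k, rfl⟩ : ∃ k, m = k + 2 := ⟨m - 2, by omega⟩
  have hruns : verticalRuns (Dyck n (k + 2)) = dyckRuns n k := by
    rw [Dyck_eq_pathOfRuns hn, verticalRuns_pathOfRuns]
  refine ⟨fun i hi hv => ?_, ?_⟩
  · apply mem_dyckRuns (k := k)
    rw [← hruns]
    exact precH_mem_verticalRuns (Finset.mem_range.mp hi) hv
  · rw [card_filter_vertical_precH_eq, hruns, Nat.add_sub_cancel]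
    exact count_dyckRuns hn k
end

section
/- In a finite connected quiver with exactly one source p, every vertex is the endpoint of a directed path starting at p. Consequently, any successor closed subset of vertices containing p contains all vertices. -/
/-- in a finite connected acyclic quiver with exactly one source `p`, every
vertex is reachable from `p` by a directed path; consequently any successor closed set of
vertices containing `p` contains every vertex. -/
theorem stmt_13 {V : Type*} [Finite V] (E : V → V → Prop)
    (hacyc : ∀ a, ¬ Relation.TransGen E a a)
    (hconn : ∀ a b, Relation.ReflTransGen (fun x y => E x y ∨ E y x) a b)
    (p : V) (hsource : ∀ a, ¬ E a p)
    (huniq : ∀ q, (∀ a, ¬ E a q) → q = p) :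
    (∀ v, Relation.ReflTransGen E p v) ∧
      ∀ β : Set V, (∀ a b, E a b → a ∈ β → b ∈ β) → p ∈ β → ∀ v, v ∈ β := by
  have h1 : IsTrans V (Relation.TransGen E) := ⟨fun _ _ _ => Relation.TransGen.trans⟩
  have h2 : IsIrrefl V (Relation.TransGen E) := ⟨hacyc⟩
  have hwf : WellFounded (Relation.TransGen E) := Finite.wellFounded_of_trans_of_irrefl _
  have key : ∀ v, Relation.ReflTransGen E p v := by
    intro v
    induction v using hwf.induction with
    | _ v ih =>
      by_cases hv : v = p
      · subst hv; exact .refl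
      · obtain ⟨u, hu⟩ : ∃ u, E u v := by
          by_contra h
          push_neg at h
          exact hv (huniq v h)
        exact (ih u (.single hu)).tail hu
  refine ⟨key, fun β hβ hp v => ?_⟩
  induction key v with
  | refl => exact hp
  | tail _ h ih => exact hβ _ _ h ih
end

section
/- Fix n ≥ 2 and m ≥ 1, and consider the maximal Dyck path D_{m+1} with horizontal edges H_{m+1} (of cardinality u_{m+1}) and vertical edges V_{m+1} (of cardinality u_m). Then the pair (S_H, S_V) = (H_{m+1}, ∅) and the pair (∅, V_{m+1}) are both compatible pairs, while (H_{m+1}, V_{m+1}) is not compatible whenever m ≥ 1 (i.e. whenever both H_{m+1} and V_{m+1} are nonempty). -/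
/-- The subpath of `l` from edge `a` to edge `b` (inclusive). -/
def seg (l : List Bool) (a b : ℕ) : List Bool := (l.drop a).take (b + 1 - a)

/-- The set of horizontal edges (indices) of the path `l`. -/
def Hset (l : List Bool) : Finset ℕ :=
  (Finset.range l.length).filter (fun i => l.getD i false = true)

/-- The set of vertical edges (indices) of the path `l`. -/
def Vset (l : List Bool) : Finset ℕ :=
  (Finset.range l.length).filter (fun i => l.getD i true = false)

/-- A pair `(SH, SV)` of sets of horizontal resp. vertical edges of the path `l` is
compatible if for every `h ∈ SH`, `v ∈ SV` with `h` preceding `v` there is an edge `e`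
on the subpath from `h` to `v` with either (`e ≠ v` and the number of vertical edges of
the subpath `h..e` equals `n` times `|h..e ∩ SH|`) or (`e ≠ h` and the number of
horizontal edges of the subpath `e..v` equals `n` times `|e..v ∩ SV|`). -/
def Compatible (n : ℕ) (l : List Bool) (SH SV : Finset ℕ) : Prop :=
  ∀ h ∈ SH, ∀ v ∈ SV, h < v →
    ∃ e, h ≤ e ∧ e ≤ v ∧
      ((e ≠ v ∧ (seg l h e).count false
          = n * ((SH.filter (fun i => h ≤ i ∧ i ≤ e)).card)) ∨
       (e ≠ h ∧ (seg l e v).count true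
          = n * ((SV.filter (fun i => e ≤ i ∧ i ≤ v)).card)))

def dyckTail (n m : ℕ) : List Bool := (Dyck n (m + 2)).drop (Dyck n (m + 1)).length

section DyckStructure

variable {n : ℕ}

lemma dyck_add_three (m : ℕ) :
    Dyck n (m + 3) = (List.replicate (n - 1) (Dyck n (m + 2))).flatten ++ dyckTail n m := rfl

lemma dyck_prefix_dyck_succ (hn : 2 ≤ n) (m : ℕ) : Dyck n (m + 1) <+: Dyck n (m + 2) := by
  cases m with
  | zero =>
    obtain ⟨k, rfl⟩ : ∃ k, n = k + 1 := ⟨n - 1, by omega⟩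
    simp [Dyck, List.replicate_succ]
  | succ m =>
    obtain ⟨k, hk⟩ : ∃ k, n - 1 = k + 1 := ⟨n - 2, by omega⟩
    rw [dyck_add_three, hk, List.replicate_succ, List.flatten_cons, List.append_assoc]
    exact List.prefix_append _ _

lemma dyck_eq_append_dyckTail (hn : 2 ≤ n) (m : ℕ) :
    Dyck n (m + 2) = Dyck n (m + 1) ++ dyckTail n m :=
  (List.prefix_iff_eq_append.mp (dyck_prefix_dyck_succ hn m)).symm

lemma dyckTail_zero (hn : 1 ≤ n) : dyckTail n 0 = List.replicate (n - 1) true ++ [false] := by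
  obtain ⟨k, rfl⟩ : ∃ k, n = k + 1 := ⟨n - 1, by omega⟩
  simp [dyckTail, Dyck, List.replicate_succ]

lemma dyckTail_succ (hn : 2 ≤ n) (m : ℕ) :
    dyckTail n (m + 1) = (List.replicate (n - 2) (Dyck n (m + 2))).flatten ++ dyckTail n m := by
  obtain ⟨k, hk⟩ : ∃ k, n - 1 = k + 1 := ⟨n - 2, by omega⟩
  rw [dyckTail, dyck_add_three, hk, List.replicate_succ, List.flatten_cons, List.append_assoc,
    List.drop_left, show n - 2 = k by omega]

lemma singleton_true_prefix_dyck (hn : 2 ≤ n) (m : ℕ) : [true] <+: Dyck n (m + 1) := by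
  induction m with
  | zero => exact List.prefix_refl _
  | succ m ih => exact ih.trans (dyck_prefix_dyck_succ hn m)

lemma singleton_false_suffix_dyckTail (hn : 2 ≤ n) (m : ℕ) : [false] <:+ dyckTail n m := by
  induction m with
  | zero => rw [dyckTail_zero (by omega)]; exact List.suffix_append _ _
  | succ m ih => rw [dyckTail_succ hn]; exact ih.trans (List.suffix_append _ _)

end DyckStructure

def slack (n : ℕ) (l : List Bool) : ℤ := n * l.count false - l.count true

def SuffixSlackPos (n : ℕ) (l : List Bool) : Prop :=
  ∀ k, 0 < k → k < l.length → 0 < slack n (l.drop k)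

def PrefixBalanced (l : List Bool) : Prop :=
  ∀ k, (l.take k).count false ≤ (l.take k).count true

section Slack

variable {n : ℕ}

@[simp] lemma slack_nil : slack n [] = 0 := by simp [slack]

lemma slack_append (a b : List Bool) : slack n (a ++ b) = slack n a + slack n b := by
  simp only [slack, List.count_append]; push_cast; ring

lemma slack_flatten_replicate (j : ℕ) (w : List Bool) :
    slack n (List.replicate j w).flatten = j * slack n w := by
  induction j with
  | zero => simp
  | succ j ih => rw [List.replicate_succ, List.flatten_cons, slack_append, ih]; push_cast; ring

lemma slack_dyck_nonneg_and_dyckTail_pos (hn : 2 ≤ n) (m : ℕ) :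
    0 ≤ slack n (Dyck n (m + 2)) ∧ 0 < slack n (dyckTail n m) := by
  induction m with
  | zero =>
    rw [dyckTail_zero (by omega)]
    constructor <;> simp [Dyck, slack, List.count_replicate]
    omega
  | succ m ih =>
    obtain ⟨hD, ht⟩ := ih
    have htail : 0 < slack n (dyckTail n (m + 1)) := by
      rw [dyckTail_succ hn, slack_append, slack_flatten_replicate]; positivity
    refine ⟨?_, htail⟩
    rw [dyck_eq_append_dyckTail hn (m + 1), slack_append]; linarith

end Slack

section Suffix

variable {n : ℕ}

lemma SuffixSlackPos.append {a b : List Bool} (ha : SuffixSlackPos n a) (hb : SuffixSlackPos n b)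
    (hb0 : 0 < slack n b) : SuffixSlackPos n (a ++ b) := by
  intro k hk hkl
  rw [List.drop_append, slack_append]
  by_cases hka : k < a.length
  · rw [Nat.sub_eq_zero_of_le hka.le, List.drop_zero]
    linarith [ha k hk hka]
  · rw [List.drop_eq_nil_of_le (by omega), slack_nil, zero_add]
    rcases Nat.eq_zero_or_pos (k - a.length) with h0 | hpos
    · rwa [h0, List.drop_zero]
    · exact hb _ hpos (by rw [List.length_append] at hkl; omega)

lemma SuffixSlackPos.flatten_replicate_append {w t : List Bool} (hw : SuffixSlackPos n w)
    (hw0 : 0 ≤ slack n w) (ht : SuffixSlackPos n t) (ht0 : 0 < slack n t) (j : ℕ) :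
    SuffixSlackPos n ((List.replicate j w).flatten ++ t) := by
  induction j with
  | zero => simpa using ht
  | succ j ih =>
    rw [List.replicate_succ, List.flatten_cons, List.append_assoc]
    refine hw.append ih ?_
    rw [slack_append, slack_flatten_replicate]; positivity

lemma suffixSlackPos_replicate_true_append_false {k : ℕ} (hk : k < n) :
    SuffixSlackPos n (List.replicate k true ++ [false]) := by
  intro i _ hi
  simp only [List.length_append, List.length_replicate, List.length_singleton] at hi
  rw [List.drop_append_of_le_length (by simp; omega), List.drop_replicate]
  simp [slack, List.count_replicate]
  omega

lemma suffixSlackPos_dyck (hn : 2 ≤ n) (m : ℕ) :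
    SuffixSlackPos n (Dyck n (m + 1)) ∧ SuffixSlackPos n (dyckTail n m) := by
  induction m with
  | zero =>
    refine ⟨fun k hk hkl => absurd hkl (by simp [Dyck]; omega), ?_⟩
    rw [dyckTail_zero (by omega)]
    exact suffixSlackPos_replicate_true_append_false (by omega)
  | succ m ih =>
    obtain ⟨hD, ht⟩ := ih
    obtain ⟨hD0, ht0⟩ := slack_dyck_nonneg_and_dyckTail_pos hn m
    have hD' : SuffixSlackPos n (Dyck n (m + 2)) := by
      rw [dyck_eq_append_dyckTail hn]; exact hD.append ht ht0
    refine ⟨hD', ?_⟩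
    rw [dyckTail_succ hn]
    exact hD'.flatten_replicate_append hD0 ht ht0 _

end Suffix

lemma PrefixBalanced.append {a b : List Bool} (ha : PrefixBalanced a) (hb : PrefixBalanced b) :
    PrefixBalanced (a ++ b) := by
  intro k
  rw [List.take_append, List.count_append, List.count_append]
  exact Nat.add_le_add (ha k) (hb _)

lemma PrefixBalanced.flatten_replicate_append {w t : List Bool} (hw : PrefixBalanced w)
    (ht : PrefixBalanced t) (j : ℕ) : PrefixBalanced ((List.replicate j w).flatten ++ t) := by
  induction j with
  | zero => simpa using ht
  | succ j ih =>
    rw [List.replicate_succ, List.flatten_cons, List.append_assoc]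
    exact hw.append ih

lemma prefixBalanced_replicate_true_append_false {k : ℕ} (hk : 1 ≤ k) :
    PrefixBalanced (List.replicate k true ++ [false]) := by
  intro i
  rw [List.take_append, List.take_replicate]
  rcases Nat.eq_zero_or_pos (i - k) with h0 | hpos
  · simp [h0, List.count_replicate]
  · rw [List.take_of_length_le (by simp; omega), min_eq_right (by omega)]
    simp [List.count_replicate]
    omega

lemma prefixBalanced_dyck (hn : 2 ≤ n) (m : ℕ) :
    PrefixBalanced (Dyck n (m + 1)) ∧ PrefixBalanced (dyckTail n m) := by
  induction m with
  | zero =>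
    refine ⟨fun k => by cases k <;> simp [Dyck], ?_⟩
    rw [dyckTail_zero (by omega)]
    exact prefixBalanced_replicate_true_append_false (by omega)
  | succ m ih =>
    obtain ⟨hD, ht⟩ := ih
    have hD' : PrefixBalanced (Dyck n (m + 2)) := by
      rw [dyck_eq_append_dyckTail hn]; exact hD.append ht
    exact ⟨hD', by rw [dyckTail_succ hn]; exact hD'.flatten_replicate_append ht _⟩

lemma count_take_eq_sum (l : List Bool) (c : Bool) (k : ℕ) :
    (l.take k).count c = ∑ i ∈ Finset.range k, if l.getD i (!c) = c then 1 else 0 := by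
  induction l generalizing k with
  | nil => simp
  | cons x l ih =>
    cases k with
    | zero => simp
    | succ k =>
      rw [List.take_succ_cons, List.count_cons, ih, Finset.sum_range_succ']
      simp only [List.getD_cons_succ, List.getD_cons_zero, beq_iff_eq]

lemma card_filter_getD_eq_count_seg (l : List Bool) (c : Bool) (a b : ℕ) :
    ((Finset.range l.length).filter (fun i => l.getD i (!c) = c ∧ a ≤ i ∧ i ≤ b)).card
      = (seg l a b).count c := by
  have hsupp : (Finset.range l.length).filter (fun i => l.getD i (!c) = c ∧ a ≤ i ∧ i ≤ b)
      = (Finset.Ico a (b + 1)).filter (fun i => l.getD i (!c) = c) := by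
    -- past the end `getD` returns `!c`, so the bound `i < l.length` comes for free
    ext i
    simp only [Finset.mem_filter, Finset.mem_range, Finset.mem_Ico]
    constructor
    · rintro ⟨-, hc, hai, hib⟩; exact ⟨⟨hai, by omega⟩, hc⟩
    · rintro ⟨⟨hai, hib⟩, hc⟩
      refine ⟨?_, hc, hai, by omega⟩
      by_contra hi
      rw [List.getD_eq_default _ _ (by omega)] at hc
      cases c <;> simp at hc
  rw [hsupp, Finset.card_filter, Finset.sum_Ico_eq_sum_range, seg, count_take_eq_sum]
  simp [List.getD_eq_getElem?_getD]

lemma card_filter_Hset (l : List Bool) (a b : ℕ) :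
    ((Hset l).filter (fun i => a ≤ i ∧ i ≤ b)).card = (seg l a b).count true := by
  rw [Hset, Finset.filter_filter]; exact card_filter_getD_eq_count_seg l true a b

lemma card_filter_Vset (l : List Bool) (a b : ℕ) :
    ((Vset l).filter (fun i => a ≤ i ∧ i ≤ b)).card = (seg l a b).count false := by
  rw [Vset, Finset.filter_filter]; exact card_filter_getD_eq_count_seg l false a b

section Endpoints

variable {n : ℕ}

lemma zero_mem_Hset_dyck (hn : 2 ≤ n) (m : ℕ) : 0 ∈ Hset (Dyck n (m + 1)) := by
  obtain ⟨s, hs⟩ := singleton_true_prefix_dyck hn m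
  simp [Hset, ← hs]

lemma two_le_length_dyck (hn : 2 ≤ n) (m : ℕ) : 2 ≤ (Dyck n (m + 2)).length := by
  have h1 := (singleton_true_prefix_dyck hn m).length_le
  have h2 := (singleton_false_suffix_dyckTail hn m).length_le
  rw [dyck_eq_append_dyckTail hn, List.length_append]
  simp only [List.length_singleton] at h1 h2
  omega

lemma length_sub_one_mem_Vset_dyck (hn : 2 ≤ n) (m : ℕ) :
    (Dyck n (m + 2)).length - 1 ∈ Vset (Dyck n (m + 2)) := by
  obtain ⟨s, hs⟩ := (singleton_false_suffix_dyckTail hn m).trans (List.suffix_append _ _)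
  rw [← dyck_eq_append_dyckTail hn] at hs
  simp [Vset, ← hs]

end Endpoints

lemma seg_zero_left (l : List Bool) (b : ℕ) : seg l 0 b = l.take (b + 1) := by
  simp [seg]

lemma seg_eq_drop {l : List Bool} {a b : ℕ} (hb : l.length ≤ b + 1) : seg l a b = l.drop a :=
  List.take_of_length_le (by rw [List.length_drop]; omega)

/-- on the maximal Dyck path `D_{m+1}`, the pairs `(H_{m+1}, ∅)` and
`(∅, V_{m+1})` are compatible, while `(H_{m+1}, V_{m+1})` is not compatible (for `m ≥ 1`). -/
theorem stmt_17 (n m : ℕ) (hn : 2 ≤ n) (hm : 1 ≤ m) :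
    Compatible n (Dyck n (m + 1)) (Hset (Dyck n (m + 1))) ∅ ∧
    Compatible n (Dyck n (m + 1)) ∅ (Vset (Dyck n (m + 1))) ∧
    ¬ Compatible n (Dyck n (m + 1)) (Hset (Dyck n (m + 1))) (Vset (Dyck n (m + 1))) := by
  refine ⟨fun _ _ v hv => absurd hv (Finset.notMem_empty v),
    fun h hh => absurd hh (Finset.notMem_empty h), ?_⟩
  obtain ⟨m, rfl⟩ : ∃ k, m = k + 1 := ⟨m - 1, by omega⟩
  change ¬ Compatible n (Dyck n (m + 2)) (Hset (Dyck n (m + 2))) (Vset (Dyck n (m + 2)))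
  have hlen := two_le_length_dyck hn m
  intro hcomp
  obtain ⟨e, -, he, ⟨-, heq⟩ | ⟨he0, heq⟩⟩ := hcomp 0 (zero_mem_Hset_dyck hn (m + 1))
    _ (length_sub_one_mem_Vset_dyck hn m) (by omega)
  · rw [card_filter_Hset, seg_zero_left] at heq
    set p := (Dyck n (m + 2)).take (e + 1)
    have hbal : p.count false ≤ p.count true := (prefixBalanced_dyck hn (m + 1)).1 (e + 1)
    have hp : p.count true + p.count false = e + 1 := by
      rw [List.count_true_add_count_false, List.length_take]; omega
    have hmul := Nat.mul_le_mul_right (p.count true) hn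
    omega
  · rw [card_filter_Vset, seg_eq_drop (by omega)] at heq
    have hsteep : SuffixSlackPos n (Dyck n (m + 2)) := (suffixSlackPos_dyck hn (m + 1)).1
    have hpos := hsteep e (by omega) (by omega)
    rw [slack, heq] at hpos
    push_cast at hpos
    linarith
end

section
/- Let Q be a quiver and suppose the map d : Q_0 × ℤ^{Q_1} → ℤ and integers c_α (α ∈ Q_1) satisfy d(j, χ + e_α) − d(i, χ) = c_α for every arrow α : i → j and every χ. Let X be a representation of Q equipped with gradings X_i = ⨁_χ X_{(i,χ)} such that X_α(X_{(i,χ)}) ⊆ X_{(j,χ+e_α)} for each arrow α : i → j. Define t·x = t^{d(i,χ)} x for x ∈ X_{(i,χ)}. Then for any collection of subspaces U_i ⊆ X_i closed under the maps X_α (i.e. X_α(U_i) ⊆ U_j for α : i → j), the translated subspaces t·U_i also satisfy X_α(t·U_i) ⊆ t·U_j for all t ∈ ℂ*. Hence t·U is again a subrepresentation, and this defines a ℂ*-action on the quiver Grassmannian Gr_𝐞(X). -/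
/-- let `Q` have vertices `ι` and arrows `A` (with source `s` and target `t`),
let `d : ι × ℤ^{Q_1} → ℤ` satisfy `d (t a, χ + e_a) − d (s a, χ) = c a`, and let `X` be a
representation equipped with gradings `X i = ⨁_χ Xg i χ` respected by the structure maps
(`X_a (Xg (s a) χ) ⊆ Xg (t a) (χ + e_a)`), i.e. a lift to the universal abelian covering.
Let `T i u` be the linear operator acting on `Xg i χ` by the scalar `u ^ d (i, χ)`.
Then for any subrepresentation `U` of `X` and any `u ∈ ℂ*`, the translate `u·U` is again a
subrepresentation: `X_a ((T (s a) u) (U (s a))) ⊆ (T (t a) u) (U (t a))`; hence `u·U = T u U`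
defines a `ℂ*`-action on the quiver Grassmannian. -/
theorem stmt_19 {ι A : Type*} [DecidableEq A] [DecidableEq (A → ℤ)] (s t : A → ι)
    (d : ι × (A → ℤ) → ℤ) (c : A → ℤ)
    (hd : ∀ (a : A) (χ : A → ℤ), d (t a, χ + Pi.single a 1) - d (s a, χ) = c a)
    (X : ι → Type*) [∀ i, AddCommGroup (X i)] [∀ i, Module ℂ (X i)]
    (Xg : ∀ i, (A → ℤ) → Submodule ℂ (X i))
    (hint : ∀ i, DirectSum.IsInternal (Xg i))
    (Xm : ∀ a, X (s a) →ₗ[ℂ] X (t a))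
    (hgr : ∀ (a : A) (χ : A → ℤ),
      Submodule.map (Xm a) (Xg (s a) χ) ≤ Xg (t a) (χ + Pi.single a 1))
    (T : ∀ i, ℂˣ → (X i →ₗ[ℂ] X i))
    (hT : ∀ (i : ι) (u : ℂˣ) (χ : A → ℤ), ∀ x ∈ Xg i χ,
      T i u x = ((u : ℂ) ^ d (i, χ)) • x)
    (U : ∀ i, Submodule ℂ (X i))
    (hU : ∀ a, Submodule.map (Xm a) (U (s a)) ≤ U (t a)) :
    ∀ (a : A) (u : ℂˣ),
      Submodule.map (Xm a) (Submodule.map (T (s a) u) (U (s a)))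
        ≤ Submodule.map (T (t a) u) (U (t a)) := by
  intro a u
  have hu : (u : ℂ) ≠ 0 := u.ne_zero
  -- key commutation relation
  have key : ∀ x : X (s a), Xm a (T (s a) u x)
      = ((u : ℂ) ^ (-(c a))) • T (t a) u (Xm a x) := by
    have htop : (⨆ χ, Xg (s a) χ) = ⊤ := (hint (s a)).submodule_iSup_eq_top
    intro x
    have hx : x ∈ ⨆ χ, Xg (s a) χ := htop ▸ Submodule.mem_top
    induction hx using Submodule.iSup_induction' with
    | mem χ y hy =>
      have hy' : Xm a y ∈ Xg (t a) (χ + Pi.single a 1) :=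
        hgr a χ ⟨y, hy, rfl⟩
      rw [hT (s a) u χ y hy, map_smul, hT (t a) u (χ + Pi.single a 1) (Xm a y) hy',
        smul_smul, ← zpow_add₀ hu]
      congr 2
      have := hd a χ
      omega
    | zero => simp
    | add y z _ _ hy hz =>
      simp [hy, hz, smul_add]
  rintro _ ⟨_, ⟨x, hx, rfl⟩, rfl⟩
  refine ⟨((u : ℂ) ^ (-(c a))) • Xm a x, ?_, ?_⟩
  · exact Submodule.smul_mem _ _ (hU a ⟨x, hx, rfl⟩)
  · rw [map_smul, ← key]
end
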